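/- arXiv:2108.04113 — 2 statements merged into one kernel-verified Lean document; each statement's English description precedes it below -/
import Mathlib

section
/- For all nonnegative integers m and n, the sum T(m,n) = \sum_{k=1}^{n} k^m L_k equals -2\delta_{m,0} plus the m-th derivative with respect to y, evaluated at y = 0, of the real function y \mapsto (e^{y(n+2)} L_n + e^{y(n+1)} L_{n+1} + e^{y} - 2) / (e^{2y} + e^{y} - 1), where \delta_{m,0} is the Kronecker delta. -/
/-!
Because `L₀ = 2` and `L_{k+2} = L_{k+1} + L_k`, multiplying `∑_{k=0}^n L_k X^k` by `X² + X - 1`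
telescopes to `L_n X^{n+2} + L_{n+1} X^{n+1} + X - 2`. With `X = e^y` the quotient is therefore
`∑_{k=0}^n L_k e^{ky}` near `0`, whose `m`-th derivative at `0` is `∑_{k=0}^n k^m L_k`; the `k = 0`
term `2 * 0^m` is the Kronecker correction.
-/

/-- Fibonacci numbers over the integers, `F_{-n} = (-1)^{n-1} F_n`. -/
def fibZ (n : ℤ) : ℤ :=
  if 0 ≤ n then (Nat.fib n.toNat : ℤ)
  else (-1) ^ ((-n).toNat + 1) * (Nat.fib (-n).toNat : ℤ)

/-- Lucas numbers over the integers, `L_{-n} = (-1)^n L_n`. -/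
def lucasZ (n : ℤ) : ℤ := fibZ (n - 1) + fibZ (n + 1)

open Real Filter Topology Finset

lemma fibZ_natCast (k : ℕ) : fibZ k = Nat.fib k := by
  simp [fibZ]

lemma fibZ_neg_natCast (k : ℕ) : fibZ (-k) = (-1) ^ (k + 1) * Nat.fib k := by
  rcases k with _ | k
  · simp [fibZ]
  · rw [fibZ, if_neg (by omega)]
    simp

lemma fibZ_add_two (n : ℤ) : fibZ (n + 2) = fibZ (n + 1) + fibZ n := by
  obtain ⟨k, rfl | rfl⟩ := Int.eq_nat_or_neg n
  · rw [show (k : ℤ) + 2 = ((k + 2 : ℕ) : ℤ) by push_cast; ring,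
      show (k : ℤ) + 1 = ((k + 1 : ℕ) : ℤ) by push_cast; ring,
      fibZ_natCast, fibZ_natCast, fibZ_natCast, Nat.fib_add_two]
    push_cast
    ring
  · rcases k with _ | _ | k
    · rfl
    · rfl
    · rw [show -((k + 2 : ℕ) : ℤ) + 2 = -(k : ℤ) by push_cast; ring,
        show -((k + 2 : ℕ) : ℤ) + 1 = -((k + 1 : ℕ) : ℤ) by push_cast; ring,
        fibZ_neg_natCast, fibZ_neg_natCast, fibZ_neg_natCast, Nat.fib_add_two]
      push_cast
      ring

lemma lucasZ_zero : lucasZ 0 = 2 := rfl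

lemma lucasZ_one : lucasZ 1 = 1 := rfl

lemma lucasZ_add_two (n : ℤ) : lucasZ (n + 2) = lucasZ (n + 1) + lucasZ n := by
  have h₁ := fibZ_add_two (n - 1)
  have h₂ := fibZ_add_two (n + 1)
  simp only [lucasZ, show n + 2 - 1 = n - 1 + 2 by ring, show n + 1 - 1 = n - 1 + 1 by ring,
    show n + 2 + 1 = n + 1 + 2 by ring, show n + 1 + 1 = n + 2 by ring] at *
  linear_combination h₁ + h₂

theorem mul_sum_lucasZ_mul_pow {R : Type*} [CommRing R] (n : ℕ) (X : R) :
    (X ^ 2 + X - 1) * ∑ k ∈ Icc 0 n, (lucasZ k : R) * X ^ k =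
      lucasZ n * X ^ (n + 2) + lucasZ (n + 1) * X ^ (n + 1) + X - 2 := by
  induction n with
  | zero =>
    simp only [Icc_self, sum_singleton, Nat.cast_zero, lucasZ_zero, lucasZ_one, zero_add,
      Int.cast_ofNat, Int.cast_one, pow_zero, pow_one, mul_one, one_mul]
    ring
  | succ n ih =>
    rw [sum_Icc_succ_top (Nat.zero_le _), mul_add, ih, Nat.cast_succ, add_assoc _ (1 : ℤ) 1, one_add_one_eq_two, lucasZ_add_two]
    push_cast
    ring

theorem iteratedDeriv_sum_mul_exp {ι : Type*} (s : Finset ι) (c a : ι → ℝ) (m : ℕ) (x : ℝ) :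
    iteratedDeriv m (fun y => ∑ i ∈ s, c i * exp (a i * y)) x =
      ∑ i ∈ s, c i * a i ^ m * exp (a i * x) := by
  rw [iteratedDeriv_fun_sum fun i _ => by fun_prop]
  simp [mul_assoc]

theorem lucas_quotient_eventuallyEq_sum_exp (n : ℕ) :
    (fun y : ℝ => (exp (y * (n + 2)) * lucasZ n + exp (y * (n + 1)) * lucasZ (n + 1)
        + exp y - 2) / (exp (2 * y) + exp y - 1)) =ᶠ[𝓝 0]
      fun y => ∑ k ∈ Icc 0 n, (lucasZ k : ℝ) * exp (k * y) := by
  have hden : ∀ᶠ y in 𝓝 (0 : ℝ), exp (2 * y) + exp y - 1 ≠ 0 :=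
    (show ContinuousAt (fun y : ℝ => exp (2 * y) + exp y - 1) 0 by fun_prop).eventually_ne
      (by norm_num)
  filter_upwards [hden] with y hy
  have hpow (j : ℕ) : exp (j * y) = exp y ^ j := exp_nat_mul y j
  rw [div_eq_iff hy, show y * (n + 2) = ((n + 2 : ℕ) : ℝ) * y by push_cast; ring,
    show y * (n + 1) = ((n + 1 : ℕ) : ℝ) * y by push_cast; ring,
    show 2 * y = ((2 : ℕ) : ℝ) * y by norm_num]
  simp only [hpow]
  linear_combination -mul_sum_lucasZ_mul_pow n (exp y)

theorem ledin_lucas_derivative (m n : ℕ) :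
    (∑ k ∈ Finset.Icc 1 n, (k : ℝ) ^ m * (lucasZ k : ℝ)) =
      -2 * (if m = 0 then (1 : ℝ) else 0) +
      iteratedDeriv m (fun y : ℝ =>
        (Real.exp (y * (n + 2)) * (lucasZ n : ℝ) + Real.exp (y * (n + 1)) * (lucasZ (n + 1) : ℝ)
            + Real.exp y - 2) / (Real.exp (2 * y) + Real.exp y - 1)) 0 := by
  rw [(lucas_quotient_eventuallyEq_sum_exp n).iteratedDeriv_eq m, iteratedDeriv_sum_mul_exp,
    ← insert_Icc_add_one_left_eq_Icc (Nat.zero_le n), sum_insert (by simp)]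
  cases m <;> simp [lucasZ_zero, mul_comm]
end

section
/- Let a, b, p, q be complex numbers with p \neq 0, q \neq 0 and p^2 \neq 4q, let h be a nonnegative integer with V_h \neq 0, and let r be any integer. Then for all nonnegative integers m and n: \sum_{k=1}^{n} k^m w_{hk+r} / V_h^k = -\delta_{m,0} w_r - n^m w_{h(n+2)+r} / (q^h V_h^n) + (V_h/q^h)^{m+1} \sum_{j=0}^{m} A(m,j) w_{h(j+m+1)+r} / V_h^j - \sum_{s=1}^{m} \binom{m}{s} (n^{m-s}/q^{h(s+1)}) \sum_{j=1}^{s} A(s,j) w_{h(j+n+s+1)+r} / V_h^{j+n-s-1}, where \delta_{m,0} is the Kronecker delta and powers of V_h with negative integer exponents are defined since V_h \neq 0. -/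
/-!
By Binet's formula `w_j = A α^j + B β^j`, where `α ≠ β` are the roots of `x^2 - p x + q`, while
`V_h = α^h + β^h` and `q^h = α^h β^h`; both sides being linear in `w`, it suffices to treat
`w_j = α^j`. Putting `z = α^h / V_h`, so that `1 - z = β^h / V_h`, the left side becomes
`α^r ∑_{k=1}^n k^m z^k`, and the identity is the closed form of this sum. That closed form comes
from the power series identity `(1 - X)^(m+1) ∑_k k^m X^k = ∑_j A(m,j) X^j` together with
`∑_{k<n} k^m X^k = ∑_k k^m X^k - X^n ∑_k (n + k)^m X^k` and the binomial expansion of `(n + k)^m`.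
-/

/-- The Eulerian numbers `A(i,j) = ∑_{t=0}^{j} (-1)^t C(i+1,t) (j-t)^i`. -/
def eulerianA (i j : ℕ) : ℤ :=
  ∑ t ∈ Finset.range (j + 1), (-1 : ℤ) ^ t * (Nat.choose (i + 1) t) * ((j - t : ℕ) ^ i : ℤ)

open Finset Polynomial

/-- For `j > m`, `A(m,j)` is the `(m+1)`-st forward difference of `x ↦ x^m` at `j - m - 1`. -/
theorem eulerianA_eq_zero_of_lt {m j : ℕ} (h : m < j) : eulerianA m j = 0 := by
  have hΔ := congr_fun (fwdDiff_iter_pow_eq_zero_of_lt (R := ℤ) (Nat.lt_succ_self m))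
    ((j - (m + 1) : ℕ) : ℤ)
  rw [fwdDiff_iter_eq_sum_shift, ← sum_range_reflect, Pi.zero_apply] at hΔ
  rw [eulerianA, ← sum_subset (range_subset_range.mpr (by omega : m + 2 ≤ j + 1))]
  · refine (sum_congr rfl fun t ht => ?_).trans hΔ
    have ht := mem_range.mp ht
    rw [show m.succ + 1 - 1 - t = m + 1 - t by omega, Nat.succ_eq_add_one,
      Nat.choose_symm (by omega), show m + 1 - (m + 1 - t) = t by omega]
    simp only [smul_eq_mul, nsmul_eq_mul, mul_one]
    push_cast [show t ≤ j by omega, show m + 1 ≤ j by omega, show t ≤ m + 1 by omega]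
    ring
  · intro t _ ht
    rw [Nat.choose_eq_zero_of_lt (by simp at ht; omega)]
    simp

theorem eulerianA_zero_right {m : ℕ} (hm : m ≠ 0) : eulerianA m 0 = 0 := by
  simp [eulerianA, hm]

theorem eulerianA_zero_zero : eulerianA 0 0 = 1 := by simp [eulerianA]

section EulerianPoly

variable {R : Type*} [CommRing R]

noncomputable def eulerianPoly (m : ℕ) : R[X] :=
  ∑ j ∈ range (m + 1), C (eulerianA m j : R) * X ^ j

theorem coeff_eulerianPoly (m j : ℕ) : (eulerianPoly m : R[X]).coeff j = eulerianA m j := by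
  simp only [eulerianPoly, finsetSum_coeff, coeff_C_mul_X_pow]
  rcases le_or_gt j m with hj | hj
  · rw [sum_eq_single j (fun i _ hij => if_neg hij.symm) (fun h => absurd (by simpa using hj) h),
      if_pos rfl]
  · rw [eulerianA_eq_zero_of_lt hj, Int.cast_zero]
    exact sum_eq_zero fun i hi => if_neg (by simp at hi; omega)

@[simp]
theorem eval_eulerianPoly (m : ℕ) (z : R) :
    (eulerianPoly m).eval z = ∑ j ∈ range (m + 1), (eulerianA m j : R) * z ^ j := by
  simp [eulerianPoly, eval_finsetSum]

theorem PowerSeries.coeff_one_sub_X_pow (n i : ℕ) :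
    coeff i ((1 - X : PowerSeries R) ^ n) = (-1) ^ i * n.choose i := by
  have h : (1 - X : PowerSeries R) = rescale (-1) ((1 + Polynomial.X : R[X]) : PowerSeries R) := by
    simp [rescale_X, sub_eq_add_neg]
  rw [h, ← map_pow, coeff_rescale, ← Polynomial.coe_pow, Polynomial.coeff_coe, coeff_one_add_X_pow]

theorem PowerSeries.one_sub_X_pow_mul_mk_pow (m : ℕ) :
    (1 - PowerSeries.X : PowerSeries R) ^ (m + 1) * PowerSeries.mk (fun k => (k : R) ^ m) =
      (eulerianPoly m : R[X]) := by
  ext j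
  rw [PowerSeries.coeff_mul, Nat.sum_antidiagonal_eq_sum_range_succ_mk, Polynomial.coeff_coe,
    coeff_eulerianPoly, eulerianA]
  simp [PowerSeries.coeff_one_sub_X_pow]

theorem coe_sum_range_pow_mul_X_pow (m n : ℕ) :
    ((∑ k ∈ range n, C ((k : R) ^ m) * X ^ k : R[X]) : PowerSeries R) =
      PowerSeries.mk (fun k => (k : R) ^ m) - PowerSeries.X ^ n *
        ∑ s ∈ range (m + 1), PowerSeries.C ((m.choose s : R) * n ^ (m - s)) *
          PowerSeries.mk (fun k => (k : R) ^ s) := by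
  ext j
  simp only [Polynomial.coeff_coe, finsetSum_coeff, coeff_C_mul_X_pow, map_sub,
    PowerSeries.coeff_mk, PowerSeries.coeff_X_pow_mul', map_sum, PowerSeries.coeff_C_mul]
  rcases lt_or_ge j n with hj | hj
  · simp [hj, show ¬ n ≤ j by omega]
  · obtain ⟨i, rfl⟩ := Nat.exists_eq_add_of_le hj
    rw [sum_eq_zero fun k hk => if_neg (by simp at hk; omega), if_pos hj, Nat.add_sub_cancel_left]
    push_cast
    rw [add_comm, add_pow]
    simp [mul_comm, mul_left_comm, mul_assoc]

theorem one_sub_X_pow_mul_sum_range_pow_mul_X_pow (m n : ℕ) :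
    (1 - X : R[X]) ^ (m + 1) * ∑ k ∈ range n, C ((k : R) ^ m) * X ^ k =
      eulerianPoly m - X ^ n * ∑ s ∈ range (m + 1),
        C ((m.choose s : R) * n ^ (m - s)) * (1 - X) ^ (m - s) * eulerianPoly s := by
  apply Polynomial.coe_injective
  rw [Polynomial.coe_mul, coe_sum_range_pow_mul_X_pow]
  -- the coercion `R[X] → R⟦X⟧` commutes with finite sums only via its bundled ring hom
  simp only [← coeToPowerSeries.ringHom_apply, map_sub, map_mul, map_pow, map_sum, map_one]
  simp only [coeToPowerSeries.ringHom_apply, coe_C, coe_X,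
    ← PowerSeries.one_sub_X_pow_mul_mk_pow, mul_sub, mul_sum]
  congr 1
  refine sum_congr rfl fun s hs => ?_
  have hsplit : (1 - PowerSeries.X : PowerSeries R) ^ (m + 1) =
      (1 - PowerSeries.X) ^ (m - s) * (1 - PowerSeries.X) ^ (s + 1) := by
    rw [← pow_add]; congr 1; simp at hs; omega
  rw [hsplit]
  ring

end EulerianPoly

theorem sum_range_succ_eq_add_sum_Icc_one {M : Type*} [AddCommMonoid M] (f : ℕ → M) (n : ℕ) :
    ∑ k ∈ range (n + 1), f k = f 0 + ∑ k ∈ Icc 1 n, f k := by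
  rw [range_eq_Ico, sum_eq_sum_Ico_succ_bot (by omega : 0 < n + 1), zero_add,
    Ico_add_one_right_eq_Icc]

theorem sum_Icc_pow_mul_pow {K : Type*} [Field K] {z : K} (hz : z ≠ 1) (m n : ℕ) :
    ∑ k ∈ Icc 1 n, (k : K) ^ m * z ^ k =
      -(if m = 0 then 1 else 0) - (n : K) ^ m * z ^ (n + 1) / (1 - z)
        + (∑ j ∈ range (m + 1), (eulerianA m j : K) * z ^ j) / (1 - z) ^ (m + 1)
        - ∑ s ∈ Icc 1 m, (m.choose s : K) * n ^ (m - s) * z ^ n *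
            (∑ j ∈ Icc 1 s, (eulerianA s j : K) * z ^ j) / (1 - z) ^ (s + 1) := by
  have h1z : 1 - z ≠ 0 := sub_ne_zero.mpr hz.symm
  have hpoly := congrArg (eval z) (one_sub_X_pow_mul_sum_range_pow_mul_X_pow (R := K) m n)
  simp only [eval_mul, eval_pow, eval_sub, eval_one, eval_X, eval_finsetSum, eval_C,
    eval_eulerianPoly] at hpoly
  have hIcc : ∑ k ∈ Icc 1 n, (k : K) ^ m * z ^ k =
      ∑ k ∈ range n, (k : K) ^ m * z ^ k + n ^ m * z ^ n - if m = 0 then 1 else 0 := by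
    have := sum_range_succ_eq_add_sum_Icc_one (fun k => (k : K) ^ m * z ^ k) n
    rw [sum_range_succ] at this
    rcases eq_or_ne m 0 with rfl | hm <;> simp_all
  have hsplit := sum_range_succ_eq_add_sum_Icc_one (fun s => (m.choose s : K) * n ^ (m - s) *
    (1 - z) ^ (m - s) * ∑ j ∈ range (s + 1), (eulerianA s j : K) * z ^ j) m
  simp only [zero_add, sum_range_one, eulerianA_zero_zero, Nat.choose_zero_right, Nat.sub_zero,
    pow_zero, Int.cast_one, Nat.cast_one, one_mul, mul_one] at hsplit
  have hterm : ∀ s ∈ Icc 1 m, (m.choose s : K) * n ^ (m - s) * z ^ n *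
      (∑ j ∈ Icc 1 s, (eulerianA s j : K) * z ^ j) / (1 - z) ^ (s + 1) =
      z ^ n * ((m.choose s : K) * n ^ (m - s) * (1 - z) ^ (m - s) *
        ∑ j ∈ range (s + 1), (eulerianA s j : K) * z ^ j) / (1 - z) ^ (m + 1) := by
    intro s hs
    have hs := mem_Icc.mp hs
    rw [sum_range_succ_eq_add_sum_Icc_one, eulerianA_zero_right (by omega), Int.cast_zero,
      zero_mul, zero_add, div_eq_div_iff (pow_ne_zero _ h1z) (pow_ne_zero _ h1z),
      show m + 1 = m - s + (s + 1) by omega, pow_add]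
    ring
  rw [sum_congr rfl hterm, ← sum_div, ← mul_sum, hIcc]
  rw [hsplit] at hpoly
  generalize ∑ k ∈ range n, (k : K) ^ m * z ^ k = S at hpoly ⊢
  generalize ∑ s ∈ Icc 1 m, (m.choose s : K) * n ^ (m - s) * (1 - z) ^ (m - s) *
    ∑ j ∈ range (s + 1), (eulerianA s j : K) * z ^ j = T at hpoly ⊢
  field_simp
  linear_combination (1 - z) * hpoly

def IsHoradam {R : Type*} [CommRing R] (p q : R) (w : ℤ → R) : Prop :=
  ∀ j : ℤ, w j = p * w (j - 1) - q * w (j - 2)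

namespace IsHoradam

variable {R : Type*} [CommRing R] {p q : R} {w : ℤ → R}

theorem add_two (hw : IsHoradam p q w) (j : ℤ) : w (j + 2) = p * w (j + 1) - q * w j := by
  simpa [add_sub_assoc] using hw (j + 2)

theorem unique [IsDomain R] (hq : q ≠ 0) {v : ℤ → R} (hw : IsHoradam p q w)
    (hv : IsHoradam p q v) (h0 : w 0 = v 0) (h1 : w 1 = v 1) : w = v := by
  suffices h : ∀ j : ℤ, w j = v j ∧ w (j + 1) = v (j + 1) from funext fun j => (h j).1
  intro j
  induction j using Int.induction_on with
  | zero => exact ⟨h0, by simpa using h1⟩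
  | succ i ih =>
    refine ⟨ih.2, ?_⟩
    rw [add_assoc, one_add_one_eq_two, hw.add_two, hv.add_two, ih.1, ih.2]
  | pred i ih =>
    rw [sub_add_cancel]
    refine ⟨mul_left_cancel₀ hq ?_, ih.1⟩
    have hw' := hw.add_two (-i - 1)
    have hv' := hv.add_two (-i - 1)
    rw [show -(i : ℤ) - 1 + 2 = -i + 1 by ring, sub_add_cancel] at hw' hv'
    linear_combination hw' - hv' + p * ih.1 - ih.2

end IsHoradam

section Binet

variable {K : Type*} [Field K] {p q : K}

theorem isHoradam_zpow {α : K} (hα : α ≠ 0) (hroot : α ^ 2 = p * α - q) :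
    IsHoradam p q (α ^ ·) := fun j => by
  show α ^ j = p * α ^ (j - 1) - q * α ^ (j - 2)
  have h2 : α ^ j = α ^ (j - 2) * α ^ 2 := by
    rw [← zpow_natCast, ← zpow_add₀ hα]; norm_num
  have h1 : α ^ (j - 1) = α ^ (j - 2) * α := by
    rw [← zpow_add_one₀ hα]; ring_nf
  rw [h2, h1, hroot]
  ring

theorem IsHoradam.eq_binet {w : ℤ → K} {α β A B : K} (hq : q ≠ 0) (hsum : α + β = p)
    (hprod : α * β = q) (hw : IsHoradam p q w) (h0 : w 0 = A + B) (h1 : w 1 = A * α + B * β) :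
    ∀ j, w j = A * α ^ j + B * β ^ j := by
  have hα : α ≠ 0 := left_ne_zero_of_mul (hprod ▸ hq)
  have hβ : β ≠ 0 := right_ne_zero_of_mul (hprod ▸ hq)
  have hαβ := isHoradam_zpow (p := p) (q := q) hα (by rw [← hsum, ← hprod]; ring)
  have hβα := isHoradam_zpow (p := p) (q := q) hβ (by rw [← hsum, ← hprod]; ring)
  refine congrFun (hw.unique (v := fun j => A * α ^ j + B * β ^ j) hq (fun j => ?_)
    (by simpa using h0) (by simpa using h1))
  linear_combination A * hαβ j + B * hβα j

theorem IsHoradam.exists_binet {w : ℤ → K} {α β : K} (hq : q ≠ 0) (hsum : α + β = p)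
    (hprod : α * β = q) (hne : α ≠ β) (hw : IsHoradam p q w) :
    ∃ A B : K, ∀ j, w j = A * α ^ j + B * β ^ j := by
  have hαβ : α - β ≠ 0 := sub_ne_zero.mpr hne
  exact ⟨(w 1 - β * w 0) / (α - β), (α * w 0 - w 1) / (α - β),
    hw.eq_binet hq hsum hprod (by field_simp; ring) (by field_simp; ring)⟩

end Binet

theorem sum_Icc_pow_mul_zpow_div_pow {K : Type*} [Field K] {u v W Q : K} (c : K) (hu : u ≠ 0)
    (hv : v ≠ 0) (hW : u + v = W) (hQ : u * v = Q) (hW0 : W ≠ 0) (m n : ℕ) :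
    ∑ k ∈ Icc 1 n, (k : K) ^ m * (c * u ^ (k : ℤ)) / W ^ k =
      -(if m = 0 then 1 else 0) * c
        - (n : K) ^ m * (c * u ^ ((n : ℤ) + 2)) / (Q * W ^ n)
        + (W / Q) ^ (m + 1) *
            ∑ j ∈ range (m + 1), (eulerianA m j : K) * (c * u ^ ((j : ℤ) + m + 1)) / W ^ j
        - ∑ s ∈ Icc 1 m, (m.choose s : K) * ((n : K) ^ (m - s) / Q ^ (s + 1)) *
            ∑ j ∈ Icc 1 s, (eulerianA s j : K) * (c * u ^ ((j : ℤ) + n + s + 1)) /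
              W ^ ((j : ℤ) + n - s - 1) := by
  -- With `u = z W` and `v = y W` every term is a monomial in `z`, `y`, `W`; the relation
  -- `z + y = 1` is only needed to identify `y` with the `1 - z` of `sum_Icc_pow_mul_pow`.
  obtain ⟨z, rfl⟩ : ∃ z, u = z * W := ⟨u / W, by field_simp⟩
  obtain ⟨y, rfl⟩ : ∃ y, v = y * W := ⟨v / W, by field_simp⟩
  subst hQ
  have hz : z ≠ 0 := left_ne_zero_of_mul hu
  have hy : y ≠ 0 := left_ne_zero_of_mul hv
  have hzy : 1 - z = y := mul_right_cancel₀ hW0 (by linear_combination -hW)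
  have hlhs : ∑ k ∈ Icc 1 n, (k : K) ^ m * (c * (z * W) ^ (k : ℤ)) / W ^ k =
      c * ∑ k ∈ Icc 1 n, (k : K) ^ m * z ^ k := by
    rw [mul_sum]
    refine sum_congr rfl fun k _ => ?_
    rw [zpow_natCast, mul_pow]
    field_simp
  have hmain : ∑ j ∈ range (m + 1),
        (eulerianA m j : K) * (c * (z * W) ^ ((j : ℤ) + m + 1)) / W ^ j =
      c * (z * W) ^ (m + 1) * ∑ j ∈ range (m + 1), (eulerianA m j : K) * z ^ j := by
    rw [mul_sum]
    refine sum_congr rfl fun j _ => ?_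
    rw [show (j : ℤ) + m + 1 = ((j + (m + 1) : ℕ) : ℤ) by push_cast; ring, zpow_natCast, pow_add,
      mul_pow z W j]
    field_simp
  have htail : ∀ s ∈ Icc 1 m,
      (m.choose s : K) * ((n : K) ^ (m - s) / (z * W * (y * W)) ^ (s + 1)) *
        ∑ j ∈ Icc 1 s, (eulerianA s j : K) * (c * (z * W) ^ ((j : ℤ) + n + s + 1)) /
          W ^ ((j : ℤ) + n - s - 1) =
      c * ((m.choose s : K) * n ^ (m - s) * z ^ n *
        (∑ j ∈ Icc 1 s, (eulerianA s j : K) * z ^ j) / y ^ (s + 1)) := by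
    intro s _
    have hterm : ∀ j ∈ Icc 1 s, (eulerianA s j : K) * (c * (z * W) ^ ((j : ℤ) + n + s + 1)) /
        W ^ ((j : ℤ) + n - s - 1) =
        c * (z * W) ^ (n + s + 1) * W ^ (s + 1) / W ^ n * ((eulerianA s j : K) * z ^ j) := by
      intro j _
      rw [show (j : ℤ) + n + s + 1 = ((j + (n + s + 1) : ℕ) : ℤ) by push_cast; ring,
        show (j : ℤ) + n - s - 1 = ((j + n : ℕ) : ℤ) - ((s + 1 : ℕ) : ℤ) by push_cast; ring,
        zpow_sub₀ hW0, zpow_natCast, zpow_natCast, zpow_natCast, pow_add, pow_add, mul_pow z W j]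
      field_simp
      ring
    rw [sum_congr rfl hterm, ← mul_sum]
    generalize ∑ j ∈ Icc 1 s, (eulerianA s j : K) * z ^ j = E
    field_simp
    ring
  rw [hlhs, hmain, sum_congr rfl htail, ← mul_sum,
    sum_Icc_pow_mul_pow (fun h => hy (by rw [← hzy, h, sub_self])), hzy,
    show (n : ℤ) + 2 = ((n + 2 : ℕ) : ℤ) by push_cast; ring, zpow_natCast]
  generalize ∑ j ∈ range (m + 1), (eulerianA m j : K) * z ^ j = E
  generalize ∑ s ∈ Icc 1 m, (m.choose s : K) * n ^ (m - s) * z ^ n *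
    (∑ j ∈ Icc 1 s, (eulerianA s j : K) * z ^ j) / y ^ (s + 1) = F
  simp only [div_pow, mul_pow]
  field_simp
  ring

theorem sum_Icc_pow_mul_div_pow_of_binet {K : Type*} [Field K] {w : ℤ → K} {α β A B W q : K}
    (hα : α ≠ 0) (hβ : β ≠ 0) (hwB : ∀ j, w j = A * α ^ j + B * β ^ j) (h : ℕ)
    (hW : α ^ h + β ^ h = W) (hq : α * β = q) (hW0 : W ≠ 0) (r : ℤ) (m n : ℕ) :
    (∑ k ∈ Icc 1 n, (k : K) ^ m * w (h * k + r) / W ^ k) =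
      -(if m = 0 then (1 : K) else 0) * w r
        - (n : K) ^ m * w (h * (n + 2) + r) / (q ^ h * W ^ n)
        + (W / q ^ h) ^ (m + 1) *
            ∑ j ∈ range (m + 1), (eulerianA m j : K) * w (h * (j + m + 1) + r) / W ^ j
        - ∑ s ∈ Icc 1 m, (m.choose s : K) * ((n : K) ^ (m - s) / q ^ (h * (s + 1))) *
            ∑ j ∈ Icc 1 s, (eulerianA s j : K) * w (h * (j + n + s + 1) + r) /
              W ^ ((j : ℤ) + n - s - 1) := by
  have hw : ∀ e : ℤ, w (h * e + r) = A * α ^ r * (α ^ h) ^ e + B * β ^ r * (β ^ h) ^ e := by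
    intro e
    rw [hwB, zpow_add₀ hα, zpow_add₀ hβ, zpow_mul, zpow_mul, zpow_natCast, zpow_natCast]
    ring
  have hqh : α ^ h * β ^ h = q ^ h := by rw [← hq, mul_pow]
  have hα_sum := sum_Icc_pow_mul_zpow_div_pow (A * α ^ r) (pow_ne_zero h hα) (pow_ne_zero h hβ)
    hW hqh hW0 m n
  have hβ_sum := sum_Icc_pow_mul_zpow_div_pow (B * β ^ r) (pow_ne_zero h hβ) (pow_ne_zero h hα)
    (by rw [add_comm, hW]) (by rw [mul_comm, hqh]) hW0 m n
  simp only [hw, hwB r, pow_mul]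
  simp only [mul_add, add_div, sum_add_distrib]
  linear_combination hα_sum + hβ_sum

theorem exists_add_eq_and_mul_eq_and_ne {K : Type*} [Field K] [IsAlgClosed K] [NeZero (2 : K)]
    {p q : K} (hpq : p ^ 2 ≠ 4 * q) : ∃ α β : K, α + β = p ∧ α * β = q ∧ α ≠ β := by
  obtain ⟨d, hd⟩ := IsAlgClosed.exists_eq_mul_self (p ^ 2 - 4 * q)
  have h2 : (2 : K) ≠ 0 := two_ne_zero
  refine ⟨(p + d) / 2, (p - d) / 2, by field_simp; ring, by field_simp; linear_combination hd, ?_⟩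
  intro h
  have hd0 : d = 0 := by
    field_simp at h
    exact (mul_eq_zero.mp (by linear_combination h : 2 * d = 0)).resolve_left h2
  exact hpq (by linear_combination hd + d * hd0)

theorem horadam_weighted_sum_polynomial_form_general (p q : ℂ)
    (hq : q ≠ 0) (hpq : p ^ 2 ≠ 4 * q)
    (w : ℤ → ℂ)
    (hw : ∀ j : ℤ, w j = p * w (j - 1) - q * w (j - 2))
    (V : ℤ → ℂ) (hV0 : V 0 = 2) (hV1 : V 1 = p)
    (hV : ∀ j : ℤ, V j = p * V (j - 1) - q * V (j - 2))
    (h : ℕ) (hVh : V h ≠ 0) (r : ℤ) :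
    ∀ m n : ℕ,
      (∑ k ∈ Finset.Icc 1 n, (k : ℂ) ^ m * w (h * k + r) / V h ^ k) =
        -(if m = 0 then (1 : ℂ) else 0) * w r
          - (n : ℂ) ^ m * w (h * (n + 2) + r) / (q ^ h * V h ^ n)
          + (V h / q ^ h) ^ (m + 1) *
              ∑ j ∈ Finset.range (m + 1), (eulerianA m j : ℂ) * w (h * (j + m + 1) + r) / V h ^ j
          - ∑ s ∈ Finset.Icc 1 m, (m.choose s : ℂ) * ((n : ℂ) ^ (m - s) / q ^ (h * (s + 1))) *
              ∑ j ∈ Finset.Icc 1 s, (eulerianA s j : ℂ) * w (h * (j + n + s + 1) + r) /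
                V h ^ ((j : ℤ) + n - s - 1) := by
  intro m n
  obtain ⟨α, β, hsum, hprod, hne⟩ := exists_add_eq_and_mul_eq_and_ne hpq
  obtain ⟨A, B, hwB⟩ := IsHoradam.exists_binet hq hsum hprod hne hw
  have hVB := IsHoradam.eq_binet (A := 1) (B := 1) hq hsum hprod hV (by rw [hV0]; norm_num)
    (by rw [hV1, ← hsum]; ring)
  exact sum_Icc_pow_mul_div_pow_of_binet (left_ne_zero_of_mul (hprod ▸ hq))
    (right_ne_zero_of_mul (hprod ▸ hq)) hwB h (by simp [hVB]) hprod hVh r m n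

theorem horadam_weighted_sum_polynomial_form (a b p q : ℂ)
    (hp : p ≠ 0) (hq : q ≠ 0) (hpq : p ^ 2 ≠ 4 * q)
    (w : ℤ → ℂ) (hw0 : w 0 = a) (hw1 : w 1 = b)
    (hw : ∀ j : ℤ, w j = p * w (j - 1) - q * w (j - 2))
    (V : ℤ → ℂ) (hV0 : V 0 = 2) (hV1 : V 1 = p)
    (hV : ∀ j : ℤ, V j = p * V (j - 1) - q * V (j - 2))
    (h : ℕ) (hVh : V h ≠ 0) (r : ℤ) :
    ∀ m n : ℕ,
      (∑ k ∈ Finset.Icc 1 n, (k : ℂ) ^ m * w (h * k + r) / V h ^ k) =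
        -(if m = 0 then (1 : ℂ) else 0) * w r
          - (n : ℂ) ^ m * w (h * (n + 2) + r) / (q ^ h * V h ^ n)
          + (V h / q ^ h) ^ (m + 1) *
              ∑ j ∈ Finset.range (m + 1), (eulerianA m j : ℂ) * w (h * (j + m + 1) + r) / V h ^ j
          - ∑ s ∈ Finset.Icc 1 m, (m.choose s : ℂ) * ((n : ℂ) ^ (m - s) / q ^ (h * (s + 1))) *
              ∑ j ∈ Finset.Icc 1 s, (eulerianA s j : ℂ) * w (h * (j + n + s + 1) + r) /
                V h ^ ((j : ℤ) + n - s - 1) :=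
  horadam_weighted_sum_polynomial_form_general p q hq hpq w hw V hV0 hV1 hV h hVh r
end
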